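/- arXiv:0809.4278 — 4 statements merged into one kernel-verified Lean document; each statement's English description precedes it below -/
import Mathlib

section
/- Let p and q be odd integers with 5 ≤ p ≤ q and let s be an even integer. Then there is a surjective group homomorphism from Γ_s(p,q) onto the presented group Q(p,q) on generators x,y,z with relators x^2, y^2, z^2, (yz)^2, (zx)^p, (yx)^q, and (yx)^{(q-1)/2}(zy)(yx)^{(q+1)/2}(zx)^{(p-1)/2}(yz)(zx)^{(p+1)/2}, sending x to x, y to y, and z to z. -/
/-- The relators of the presented group `Γ_s(p,q)`, the fundamental group of `s`-surgery
on the `(-2,p,q)` pretzel knot (via the Wirtinger presentation), on generators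
`x = of 0`, `y = of 1`, `z = of 2`. -/
def pretzelRels (p q s : ℤ) : Set (FreeGroup (Fin 3)) :=
  let x : FreeGroup (Fin 3) := FreeGroup.of 0
  let y : FreeGroup (Fin 3) := FreeGroup.of 1
  let z : FreeGroup (Fin 3) := FreeGroup.of 2
  let l : FreeGroup (Fin 3) :=
    x ^ (-2 * (p + q)) * (y * x) ^ ((q - 1) / 2) * (y * z⁻¹)⁻¹ * (y * x) ^ ((q + 1) / 2) *
      (z * x) ^ ((p - 1) / 2) * (y * z⁻¹) * (z * x) ^ ((p + 1) / 2)
  { (z * x) ^ ((p - 1) / 2) * z * (z * x) ^ (-((p - 1) / 2)) *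
      ((y * x) ^ (-((q + 1) / 2)) * y * (y * x) ^ ((q + 1) / 2))⁻¹,
    (y * z⁻¹)⁻¹ * y * (y * z⁻¹) *
      ((y * x) ^ (-((q - 1) / 2)) * x * (y * x) ^ ((q - 1) / 2))⁻¹,
    (y * z⁻¹)⁻¹ * z * (y * z⁻¹) *
      ((z * x) ^ ((p + 1) / 2) * x * (z * x) ^ (-((p + 1) / 2)))⁻¹,
    x ^ s * l }

/-- The relators of the quotient group `Q(p,q)` on generators
`x = of 0`, `y = of 1`, `z = of 2`. -/
def QRels (p q : ℤ) : Set (FreeGroup (Fin 3)) :=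
  let x : FreeGroup (Fin 3) := FreeGroup.of 0
  let y : FreeGroup (Fin 3) := FreeGroup.of 1
  let z : FreeGroup (Fin 3) := FreeGroup.of 2
  { x ^ 2, y ^ 2, z ^ 2, (y * z) ^ 2, (z * x) ^ p, (y * x) ^ q,
    (y * x) ^ ((q - 1) / 2) * (z * y) * (y * x) ^ ((q + 1) / 2) *
      (z * x) ^ ((p - 1) / 2) * (y * z) * (z * x) ^ ((p + 1) / 2) }

theorem pqAux {G : Type*} [Group G] (X Y Z : G) (a b : ℤ)
    (h1 : X ^ 2 = 1) (h2 : Y ^ 2 = 1) (h3 : Z ^ 2 = 1) (h4 : (Y * Z) ^ 2 = 1)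
    (h5 : (Z * X) ^ (2 * b + 1) = 1) (h6 : (Y * X) ^ (2 * a + 1) = 1) :
    ((Z * X) ^ b * Z * (Z * X) ^ (-b) = X) ∧
    ((Y * X) ^ (-(a+1)) * Y * (Y * X) ^ (a+1) = X) ∧
    ((Y * Z)⁻¹ * Y * (Y * Z) = Y) ∧
    ((Y * X) ^ (-a) * X * (Y * X) ^ a = Y) ∧
    ((Y * Z)⁻¹ * Z * (Y * Z) = Z) ∧
    ((Z * X) ^ (b+1) * X * (Z * X) ^ (-(b+1)) = Z) := by
  have hXi : X⁻¹ = X := inv_eq_of_mul_eq_one_right (by rw [← sq, h1])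
  have hYi : Y⁻¹ = Y := inv_eq_of_mul_eq_one_right (by rw [← sq, h2])
  have hZi : Z⁻¹ = Z := inv_eq_of_mul_eq_one_right (by rw [← sq, h3])
  have hXX : X * X = 1 := by rw [← sq, h1]
  have hYY : Y * Y = 1 := by rw [← sq, h2]
  have hZZ : Z * Z = 1 := by rw [← sq, h3]
  have hcomm : Z * Y = Y * Z := by
    have h : (Y * Z)⁻¹ = Y * Z := inv_eq_of_mul_eq_one_right (by rw [← sq, h4])
    rw [← h, mul_inv_rev, hYi, hZi]
  have cXZ : ∀ n : ℤ, X * (Z * X) ^ n = (Z * X) ^ (-n) * X := by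
    intro n
    have h : SemiconjBy X (Z * X) (Z * X)⁻¹ := by
      have : X * (Z * X) = (Z * X)⁻¹ * X := by rw [mul_inv_rev, hXi, hZi]; group
      exact this
    have hn := (h.zpow_right n).eq
    rwa [inv_zpow, ← zpow_neg] at hn
  have cXY : ∀ n : ℤ, X * (Y * X) ^ n = (Y * X) ^ (-n) * X := by
    intro n
    have h : SemiconjBy X (Y * X) (Y * X)⁻¹ := by
      have : X * (Y * X) = (Y * X)⁻¹ * X := by rw [mul_inv_rev, hXi, hYi]; group
      exact this
    have hn := (h.zpow_right n).eq
    rwa [inv_zpow, ← zpow_neg] at hn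
  have cZZ : ∀ n : ℤ, Z * (Z * X) ^ n = (Z * X) ^ (-n) * Z := by
    intro n
    have h : SemiconjBy Z (Z * X) (Z * X)⁻¹ := by
      have : Z * (Z * X) = (Z * X)⁻¹ * Z := by
        rw [mul_inv_rev, hXi, hZi, ← mul_assoc, hZZ, one_mul, mul_assoc, hZZ, mul_one]
      exact this
    have hn := (h.zpow_right n).eq
    rwa [inv_zpow, ← zpow_neg] at hn
  have cYY : ∀ n : ℤ, Y * (Y * X) ^ n = (Y * X) ^ (-n) * Y := by
    intro n
    have h : SemiconjBy Y (Y * X) (Y * X)⁻¹ := by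
      have : Y * (Y * X) = (Y * X)⁻¹ * Y := by
        rw [mul_inv_rev, hXi, hYi, ← mul_assoc, hYY, one_mul, mul_assoc, hYY, mul_one]
      exact this
    have hn := (h.zpow_right n).eq
    rwa [inv_zpow, ← zpow_neg] at hn
  have e1 : (Z * X) ^ (b + b) = (Z * X)⁻¹ := by
    have h := zpow_add (Z * X) (2 * b + 1) (-1)
    rw [h5, one_mul, zpow_neg_one] at h
    rw [show b + b = 2 * b + 1 + (-1) by ring, h]
  have e2 : (Y * X) ^ (-(a+1) + -(a+1)) = (Y * X)⁻¹ := by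
    have h := zpow_add (Y * X) (-(2 * a + 1)) (-1)
    rw [zpow_neg, h6, inv_one, one_mul, zpow_neg_one] at h
    rw [show -(a+1) + -(a+1) = -(2 * a + 1) + (-1) by ring, h]
  have e4 : (Y * X) ^ (-a + -a) = Y * X := by
    have h := zpow_add (Y * X) (-(2 * a + 1)) 1
    rw [zpow_neg, h6, inv_one, one_mul, zpow_one] at h
    rw [show -a + -a = -(2 * a + 1) + 1 by ring, h]
  have e6 : (Z * X) ^ ((b+1) + (b+1)) = Z * X := by
    have h := zpow_add (Z * X) (2 * b + 1) 1
    rw [h5, one_mul, zpow_one] at h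
    rw [show (b+1) + (b+1) = 2 * b + 1 + 1 by ring, h]
  refine ⟨?_, ?_, ?_, ?_, ?_, ?_⟩
  · rw [mul_assoc, cZZ, neg_neg, ← mul_assoc, ← zpow_add, e1, mul_inv_rev, hXi, hZi,
      mul_assoc, hZZ, mul_one]
  · rw [mul_assoc, cYY, ← mul_assoc, ← zpow_add, e2, mul_inv_rev, hXi, hYi,
      mul_assoc, hYY, mul_one]
  · rw [mul_inv_rev, hYi, hZi, ← mul_assoc, mul_assoc Z Y Y, hYY, mul_one, hcomm,
      mul_assoc, hZZ, mul_one]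
  · rw [mul_assoc, cXY, ← mul_assoc, ← zpow_add, e4, mul_assoc, hXX, mul_one]
  · rw [mul_inv_rev, hYi, hZi, hcomm, mul_assoc Y Z Z, hZZ, mul_one, ← mul_assoc, hYY, one_mul]
  · rw [mul_assoc, cXZ, neg_neg, ← mul_assoc, ← zpow_add, e6, mul_assoc, hXX, mul_one]

/-- For `p,q` odd, `5 ≤ p ≤ q` and `s` even, `Γ_s(p,q)` surjects onto `Q(p,q)`,
sending `x` to `x`, `y` to `y`, and `z` to `z`. -/
theorem gamma_surjects_onto_Q (p q : ℤ) (hp : Odd p) (hq : Odd q)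
    (hp5 : 5 ≤ p) (hpq : p ≤ q) (s : ℤ) (hs : Even s) :
    ∃ f : PresentedGroup (pretzelRels p q s) →* PresentedGroup (QRels p q),
      Function.Surjective f ∧
      f (PresentedGroup.of 0) = PresentedGroup.of 0 ∧
      f (PresentedGroup.of 1) = PresentedGroup.of 1 ∧
      f (PresentedGroup.of 2) = PresentedGroup.of 2 := by
  obtain ⟨b, hb⟩ := hp
  obtain ⟨a, ha⟩ := hq
  obtain ⟨t, ht⟩ := hs
  have hbp1 : (p - 1) / 2 = b := by omega
  have hbp2 : (p + 1) / 2 = b + 1 := by omega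
  have haq1 : (q - 1) / 2 = a := by omega
  have haq2 : (q + 1) / 2 = a + 1 := by omega
  set Q := PresentedGroup (QRels p q) with hQ
  set X : Q := PresentedGroup.of 0 with hXdef
  set Y : Q := PresentedGroup.of 1 with hYdef
  set Z : Q := PresentedGroup.of 2 with hZdef
  have key : ∀ w ∈ QRels p q, PresentedGroup.mk (QRels p q) w = 1 := fun w hw =>
    (QuotientGroup.eq_one_iff w).mpr (Subgroup.subset_normalClosure hw)
  have hmkof : ∀ i : Fin 3, PresentedGroup.mk (QRels p q) (FreeGroup.of i) = PresentedGroup.of i :=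
    fun _ => rfl
  have hX2 : X ^ 2 = 1 := by
    have h := key ((FreeGroup.of 0) ^ 2) (by simp [QRels])
    simpa [hmkof, ← hXdef] using h
  have hY2 : Y ^ 2 = 1 := by
    have h := key ((FreeGroup.of 1) ^ 2) (by simp [QRels])
    simpa [hmkof, ← hYdef] using h
  have hZ2 : Z ^ 2 = 1 := by
    have h := key ((FreeGroup.of 2) ^ 2) (by simp [QRels])
    simpa [hmkof, ← hZdef] using h
  have hYZ : (Y * Z) ^ 2 = 1 := by
    have h := key ((FreeGroup.of 1 * FreeGroup.of 2) ^ 2) (by simp [QRels])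
    simpa [hmkof, ← hYdef, ← hZdef] using h
  have hZX : (Z * X) ^ (2 * b + 1) = 1 := by
    have h : (Z * X) ^ p = 1 := by
      have h := key ((FreeGroup.of 2 * FreeGroup.of 0) ^ p) (by simp [QRels])
      simpa [hmkof, ← hXdef, ← hZdef] using h
    rw [show (2 * b + 1 : ℤ) = p from hb.symm]; exact h
  have hYX : (Y * X) ^ (2 * a + 1) = 1 := by
    have h : (Y * X) ^ q = 1 := by
      have h := key ((FreeGroup.of 1 * FreeGroup.of 0) ^ q) (by simp [QRels])
      simpa [hmkof, ← hXdef, ← hYdef] using h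
    rw [show (2 * a + 1 : ℤ) = q from ha.symm]; exact h
  have hW : (Y * X) ^ a * (Z * Y) * (Y * X) ^ (a + 1) * (Z * X) ^ b * (Y * Z) *
      (Z * X) ^ (b + 1) = 1 := by
    have h := key ((FreeGroup.of 1 * FreeGroup.of 0) ^ ((q - 1) / 2) *
        (FreeGroup.of 2 * FreeGroup.of 1) * (FreeGroup.of 1 * FreeGroup.of 0) ^ ((q + 1) / 2) *
        (FreeGroup.of 2 * FreeGroup.of 0) ^ ((p - 1) / 2) * (FreeGroup.of 1 * FreeGroup.of 2) *
        (FreeGroup.of 2 * FreeGroup.of 0) ^ ((p + 1) / 2)) (by simp [QRels])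
    simp only [map_mul, map_zpow, hmkof, ← hXdef, ← hYdef, ← hZdef, hbp1, hbp2, haq1, haq2] at h
    exact h
  obtain ⟨G1, G2, G3, G4, G5, G6⟩ := pqAux X Y Z a b hX2 hY2 hZ2 hYZ hZX hYX
  have hXi : X⁻¹ = X := inv_eq_of_mul_eq_one_right (by rw [← sq, hX2])
  have hYi : Y⁻¹ = Y := inv_eq_of_mul_eq_one_right (by rw [← sq, hY2])
  have hZi : Z⁻¹ = Z := inv_eq_of_mul_eq_one_right (by rw [← sq, hZ2])
  have hXX : X * X = 1 := by rw [← sq, hX2]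
  have hex : ∀ n : ℤ, X ^ (2 * n) = 1 := by
    intro n
    rw [zpow_mul, show (X : Q) ^ (2:ℤ) = X * X from zpow_two X, hXX, one_zpow]
  have hXs : X ^ s = 1 := by
    rw [ht, show t + t = 2 * t by ring]; exact hex t
  have hXpq : X ^ (-2 * (p + q)) = 1 := by
    rw [show -2 * (p + q) = 2 * (-(p + q)) by ring]; exact hex _
  have hcond : ∀ r ∈ pretzelRels p q s,
      FreeGroup.lift (fun i : Fin 3 => (PresentedGroup.of i : Q)) r = 1 := by
    intro r hr
    simp only [pretzelRels, Set.mem_insert_iff, Set.mem_singleton_iff] at hr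
    rcases hr with h | h | h | h <;> subst h <;>
      simp only [map_mul, map_inv, map_zpow, map_pow, FreeGroup.lift_apply_of, hbp1, hbp2, haq1, haq2,
        ← hXdef, ← hYdef, ← hZdef, hZi]
    · rw [G1, G2]; group
    · rw [G3, G4]; group
    · rw [G5, G6]; group
    · rw [hXs, hXpq, one_mul, one_mul,
        show (Y * Z)⁻¹ = Z * Y by rw [mul_inv_rev, hYi, hZi], hW]
  refine ⟨PresentedGroup.toGroup hcond, ?_, ?_, ?_, ?_⟩
  · rw [← MonoidHom.range_eq_top, eq_top_iff, ← PresentedGroup.closure_range_of (QRels p q)]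
    refine (Subgroup.closure_le _).mpr ?_
    rintro _ ⟨i, rfl⟩
    exact ⟨PresentedGroup.of i, PresentedGroup.toGroup.of hcond⟩
  · exact PresentedGroup.toGroup.of hcond
  · exact PresentedGroup.toGroup.of hcond
  · exact PresentedGroup.toGroup.of hcond
end

section
/- Let p and q be odd integers with 5 ≤ p ≤ q. Then the presented group Γ_{2(p+q)-1}(p,q) is isomorphic to the presented group H⁻(p,q) on generators a,b,α,β with relators α^{-1}a^{(p-1)/2}, β^{-1}b^{(q-1)/2}, aβb^{-1}aβ(αbαβ)^2, and αba^{-1}αb(αβaβ)^2. -/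
/-- The relators of the group `H⁻(p,q)` on generators
`a = of 0`, `b = of 1`, `α = of 2`, `β = of 3`. -/
def HminusRels (p q : ℤ) : Set (FreeGroup (Fin 4)) :=
  let a : FreeGroup (Fin 4) := FreeGroup.of 0
  let b : FreeGroup (Fin 4) := FreeGroup.of 1
  let al : FreeGroup (Fin 4) := FreeGroup.of 2
  let be : FreeGroup (Fin 4) := FreeGroup.of 3
  { al⁻¹ * a ^ ((p - 1) / 2), be⁻¹ * b ^ ((q - 1) / 2),
    a * be * b⁻¹ * a * be * (al * b * al * be) ^ 2,
    al * b * a⁻¹ * al * b * (al * be * a * be) ^ 2 }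

private theorem mk_rel' {α : Type*} {rels : Set (FreeGroup α)} {r : FreeGroup α}
    (h : r ∈ rels) : PresentedGroup.mk rels r = 1 :=
  (QuotientGroup.eq_one_iff r).mpr (Subgroup.subset_normalClosure h)

set_option maxHeartbeats 8000000

/-- For `p,q` odd with `5 ≤ p ≤ q`, the group `Γ_{2(p+q)-1}(p,q)` is isomorphic to
`H⁻(p,q) = ⟨a,b,α,β ∣ α = a^{(p-1)/2}, β = b^{(q-1)/2},
aβb⁻¹aβ(αbαβ)², αba⁻¹αb(αβaβ)²⟩`. -/
theorem gamma_iso_Hminus (p q : ℤ) (hp : Odd p) (hq : Odd q)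
    (hp5 : 5 ≤ p) (hpq : p ≤ q) :
    Nonempty (PresentedGroup (pretzelRels p q (2 * (p + q) - 1)) ≃*
      PresentedGroup (HminusRels p q)) := by
  have hp2 : p % 2 = 1 := Int.odd_iff.mp hp
  have hq2 : q % 2 = 1 := Int.odd_iff.mp hq
  have hp1 : (p + 1) / 2 = (p - 1) / 2 + 1 := by omega
  have hq1 : (q + 1) / 2 = (q - 1) / 2 + 1 := by omega
  -- generators of H⁻(p,q)
  set a : PresentedGroup (HminusRels p q) := PresentedGroup.of 0 with ha
  set b : PresentedGroup (HminusRels p q) := PresentedGroup.of 1 with hb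
  set al : PresentedGroup (HminusRels p q) := PresentedGroup.of 2 with hal
  set be : PresentedGroup (HminusRels p q) := PresentedGroup.of 3 with hbe
  have mka : PresentedGroup.mk (HminusRels p q) (FreeGroup.of 0) = a := by rw [ha]; rfl
  have mkb : PresentedGroup.mk (HminusRels p q) (FreeGroup.of 1) = b := by rw [hb]; rfl
  have mkal : PresentedGroup.mk (HminusRels p q) (FreeGroup.of 2) = al := by rw [hal]; rfl
  have mkbe : PresentedGroup.mk (HminusRels p q) (FreeGroup.of 3) = be := by rw [hbe]; rfl
  -- the relations of H⁻(p,q)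
  have hrelH : ∀ r ∈ HminusRels p q, PresentedGroup.mk (HminusRels p q) r = 1 :=
    fun _ hr => mk_rel' hr
  have h1 := hrelH _ (by
    simp only [HminusRels, Set.mem_insert_iff, Set.mem_singleton_iff]; exact Or.inl rfl)
  have h2 := hrelH _ (by
    simp only [HminusRels, Set.mem_insert_iff, Set.mem_singleton_iff]; exact Or.inr (Or.inl rfl))
  have h3 := hrelH _ (by
    simp only [HminusRels, Set.mem_insert_iff, Set.mem_singleton_iff];
    exact Or.inr (Or.inr (Or.inl rfl)))
  have h4 := hrelH _ (by
    simp only [HminusRels, Set.mem_insert_iff, Set.mem_singleton_iff];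
    exact Or.inr (Or.inr (Or.inr rfl)))
  simp only [map_mul, map_inv, map_zpow, map_pow, mka, mkb, mkal, mkbe] at h1 h2 h3 h4
  have hAl : al = a ^ ((p - 1) / 2) := inv_mul_eq_one.mp h1
  have hBe : be = b ^ ((q - 1) / 2) := inv_mul_eq_one.mp h2
  rw [hAl, hBe] at h3 h4
  have h3i := congrArg Inv.inv h3
  rw [inv_one] at h3i
  -- generators of Γ
  set gx : PresentedGroup (pretzelRels p q (2 * (p + q) - 1)) := PresentedGroup.of 0 with hgx
  set gy : PresentedGroup (pretzelRels p q (2 * (p + q) - 1)) := PresentedGroup.of 1 with hgy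
  set gz : PresentedGroup (pretzelRels p q (2 * (p + q) - 1)) := PresentedGroup.of 2 with hgz
  have mkx : PresentedGroup.mk (pretzelRels p q (2 * (p + q) - 1)) (FreeGroup.of 0) = gx := by
    rw [hgx]; rfl
  have mky : PresentedGroup.mk (pretzelRels p q (2 * (p + q) - 1)) (FreeGroup.of 1) = gy := by
    rw [hgy]; rfl
  have mkz : PresentedGroup.mk (pretzelRels p q (2 * (p + q) - 1)) (FreeGroup.of 2) = gz := by
    rw [hgz]; rfl
  have hrelG : ∀ r ∈ pretzelRels p q (2 * (p + q) - 1),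
      PresentedGroup.mk (pretzelRels p q (2 * (p + q) - 1)) r = 1 :=
    fun _ hr => mk_rel' hr
  have hR2 := hrelG _ (by
    simp only [pretzelRels, Set.mem_insert_iff, Set.mem_singleton_iff]; exact Or.inr (Or.inl rfl))
  have hR3 := hrelG _ (by
    simp only [pretzelRels, Set.mem_insert_iff, Set.mem_singleton_iff];
    exact Or.inr (Or.inr (Or.inl rfl)))
  have hR4 := hrelG _ (by
    simp only [pretzelRels, Set.mem_insert_iff, Set.mem_singleton_iff];
    exact Or.inr (Or.inr (Or.inr rfl)))
  simp only [map_mul, map_inv, map_zpow, mkx, mky, mkz] at hR2 hR3 hR4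
  rw [hp1] at hR3 hR4
  rw [hq1] at hR4
  -- abbreviate A = yx, B = zx
  set vA : PresentedGroup (pretzelRels p q (2 * (p + q) - 1)) := gy * gx with hvA
  set vB : PresentedGroup (pretzelRels p q (2 * (p + q) - 1)) := gz * gx with hvB
  have hyA : gy = vA * gx⁻¹ := by rw [hvA]; group
  have hzB : gz = vB * gx⁻¹ := by rw [hvB]; group
  rw [hyA, hzB] at hR2 hR3 hR4
  -- the longitude relation: x = A^n B A^n B^m A B^m
  have hx : gx = vA ^ ((q - 1) / 2) * vB * vA ^ ((q - 1) / 2) * vB ^ ((p - 1) / 2) * vA *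
      vB ^ ((p - 1) / 2) := by
    rw [← mul_one gx, ← hR4]
    group
  have hR2w := hR2
  have hR3w := hR3
  rw [hx] at hR2w hR3w
  -- the two homomorphisms
  set φf : Fin 3 → PresentedGroup (HminusRels p q) :=
    ![(a ^ ((p - 1) / 2) * b * a ^ ((p - 1) / 2) * b ^ ((q - 1) / 2) * a * b ^ ((q - 1) / 2))⁻¹,
      b⁻¹ * (a ^ ((p - 1) / 2) * b * a ^ ((p - 1) / 2) * b ^ ((q - 1) / 2) * a * b ^ ((q - 1) / 2)),
      a⁻¹ * (a ^ ((p - 1) / 2) * b * a ^ ((p - 1) / 2) * b ^ ((q - 1) / 2) * a * b ^ ((q - 1) / 2))]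
    with hφf
  set ψf : Fin 4 → PresentedGroup (pretzelRels p q (2 * (p + q) - 1)) :=
    ![vB⁻¹, vA⁻¹, vB ^ (-((p - 1) / 2)), vA ^ (-((q - 1) / 2))] with hψf
  have hφ : ∀ r ∈ pretzelRels p q (2 * (p + q) - 1), FreeGroup.lift φf r = 1 := by
    intro r hr
    simp only [pretzelRels, Set.mem_insert_iff, Set.mem_singleton_iff] at hr
    obtain rfl | rfl | rfl | rfl := hr
    · -- relator R1: consequence of S3 and S4
      rw [hq1]
      simp only [map_mul, map_inv, map_zpow, FreeGroup.lift_apply_of, hφf,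
        Matrix.cons_val_zero, Matrix.cons_val_one, Matrix.head_cons,
        Matrix.cons_val_two, Matrix.tail_cons]
      rw [show (1 : PresentedGroup (HminusRels p q)) =
        (a ^ (-((p - 1) / 2)) * b⁻¹ * a * a ^ (-((p - 1) / 2 + 1))) * 1 *
        (a ^ ((p - 1) / 2 + 1) *
          (a ^ (-((p - 1) / 2 + 1)) *
            (a ^ ((p - 1) / 2) * b * a ^ ((p - 1) / 2) * b ^ ((q - 1) / 2) * a *
              b ^ ((q - 1) / 2))⁻¹ *
            a ^ ((p - 1) / 2 + 1) * a⁻¹ * b * a ^ ((p - 1) / 2) * b ^ ((q - 1) / 2 + 1) * b⁻¹ *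
            a * b ^ ((q - 1) / 2) *
            (a ^ ((p - 1) / 2) * b * a ^ ((p - 1) / 2) * b ^ ((q - 1) / 2) * a *
              b ^ ((q - 1) / 2)) *
            b ^ (-((q - 1) / 2))) *
          (a ^ ((p - 1) / 2 - 1) * b * a ^ ((p - 1) / 2) * b ^ ((q - 1) / 2))) * 1 *
        ((a ^ ((p - 1) / 2 - 1) * b * a ^ ((p - 1) / 2) * b ^ ((q - 1) / 2))⁻¹ *
          (a⁻¹ * b ^ (-((q - 1) / 2)))) from by group]
      nth_rewrite 1 [← h4]
      rw [← h3i]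
      simp only [pow_two]
      group
    · -- relator R2: conjugate of S3
      simp only [map_mul, map_inv, map_zpow, FreeGroup.lift_apply_of, hφf,
        Matrix.cons_val_zero, Matrix.cons_val_one, Matrix.head_cons,
        Matrix.cons_val_two, Matrix.tail_cons]
      rw [show (1 : PresentedGroup (HminusRels p q)) =
        (a ^ ((p - 1) / 2 - 1) * b * a ^ ((p - 1) / 2) * b ^ ((q - 1) / 2)) * 1 *
        (a ^ ((p - 1) / 2 - 1) * b * a ^ ((p - 1) / 2) * b ^ ((q - 1) / 2))⁻¹ from by group,
        ← h3]
      simp only [pow_two]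
      group
    · -- relator R3: conjugate of S4
      rw [hp1]
      simp only [map_mul, map_inv, map_zpow, FreeGroup.lift_apply_of, hφf,
        Matrix.cons_val_zero, Matrix.cons_val_one, Matrix.head_cons,
        Matrix.cons_val_two, Matrix.tail_cons]
      rw [show (1 : PresentedGroup (HminusRels p q)) =
        a ^ (-((p - 1) / 2 + 1)) * 1 * (a ^ (-((p - 1) / 2 + 1)))⁻¹ from by group,
        ← h4]
      simp only [pow_two]
      group
    · -- relator R4: free identity
      rw [hp1, hq1]
      simp only [map_mul, map_inv, map_zpow, FreeGroup.lift_apply_of, hφf,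
        Matrix.cons_val_zero, Matrix.cons_val_one, Matrix.head_cons,
        Matrix.cons_val_two, Matrix.tail_cons]
      group
  have hψ : ∀ r ∈ HminusRels p q, FreeGroup.lift ψf r = 1 := by
    intro r hr
    simp only [HminusRels, Set.mem_insert_iff, Set.mem_singleton_iff] at hr
    obtain rfl | rfl | rfl | rfl := hr
    · simp only [map_mul, map_inv, map_zpow, FreeGroup.lift_apply_of, hψf,
        Matrix.cons_val_zero, Matrix.cons_val_one, Matrix.head_cons,
        Matrix.cons_val_two, Matrix.cons_val_three, Matrix.tail_cons]
      group
    · simp only [map_mul, map_inv, map_zpow, FreeGroup.lift_apply_of, hψf,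
        Matrix.cons_val_zero, Matrix.cons_val_one, Matrix.head_cons,
        Matrix.cons_val_two, Matrix.cons_val_three, Matrix.tail_cons]
      group
    · -- S3 is a conjugate of the image of R2
      simp only [map_mul, map_inv, map_zpow, map_pow, FreeGroup.lift_apply_of, hψf,
        Matrix.cons_val_zero, Matrix.cons_val_one, Matrix.head_cons,
        Matrix.cons_val_two, Matrix.cons_val_three, Matrix.tail_cons]
      rw [show (1 : PresentedGroup (pretzelRels p q (2 * (p + q) - 1))) =
        (vB ^ (1 - (p - 1) / 2) * vA⁻¹ * vB ^ (-((p - 1) / 2)) * vA ^ (-((q - 1) / 2)))⁻¹ * 1 *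
        (vB ^ (1 - (p - 1) / 2) * vA⁻¹ * vB ^ (-((p - 1) / 2)) * vA ^ (-((q - 1) / 2)))
        from by group, ← hR2w]
      simp only [pow_two]
      group
    · -- S4 is a conjugate of the image of R3
      simp only [map_mul, map_inv, map_zpow, map_pow, FreeGroup.lift_apply_of, hψf,
        Matrix.cons_val_zero, Matrix.cons_val_one, Matrix.head_cons,
        Matrix.cons_val_two, Matrix.cons_val_three, Matrix.tail_cons]
      rw [show (1 : PresentedGroup (pretzelRels p q (2 * (p + q) - 1))) =
        vB ^ (-((p - 1) / 2 + 1)) * 1 * vB ^ ((p - 1) / 2 + 1) from by group, ← hR3w]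
      simp only [pow_two]
      group
  refine ⟨MonoidHom.toMulEquiv (PresentedGroup.toGroup hφ) (PresentedGroup.toGroup hψ) ?_ ?_⟩
  · apply PresentedGroup.ext
    intro i
    fin_cases i
    · show ((PresentedGroup.toGroup hψ).comp (PresentedGroup.toGroup hφ)) (PresentedGroup.of 0) =
        (MonoidHom.id (PresentedGroup (pretzelRels p q (2 * (p + q) - 1)))) (PresentedGroup.of 0)
      simp only [MonoidHom.comp_apply, MonoidHom.id_apply, PresentedGroup.toGroup.of, hφf,
        Matrix.cons_val_zero, Matrix.cons_val_one, Matrix.cons_val_two, Matrix.head_cons,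
        Matrix.tail_cons, map_mul, map_inv, map_zpow, ha, hb, hψf]
      rw [← hgx, hx]
      group
    · show ((PresentedGroup.toGroup hψ).comp (PresentedGroup.toGroup hφ)) (PresentedGroup.of 1) =
        (MonoidHom.id (PresentedGroup (pretzelRels p q (2 * (p + q) - 1)))) (PresentedGroup.of 1)
      simp only [MonoidHom.comp_apply, MonoidHom.id_apply, PresentedGroup.toGroup.of, hφf,
        Matrix.cons_val_zero, Matrix.cons_val_one, Matrix.cons_val_two, Matrix.head_cons,
        Matrix.tail_cons, map_mul, map_inv, map_zpow, ha, hb, hψf]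
      rw [← hgy, hyA, hx]
      group
    · show ((PresentedGroup.toGroup hψ).comp (PresentedGroup.toGroup hφ)) (PresentedGroup.of 2) =
        (MonoidHom.id (PresentedGroup (pretzelRels p q (2 * (p + q) - 1)))) (PresentedGroup.of 2)
      simp only [MonoidHom.comp_apply, MonoidHom.id_apply, PresentedGroup.toGroup.of, hφf,
        Matrix.cons_val_zero, Matrix.cons_val_one, Matrix.cons_val_two, Matrix.head_cons,
        Matrix.tail_cons, map_mul, map_inv, map_zpow, ha, hb, hψf]
      rw [← hgz, hzB, hx]
      group
  · apply PresentedGroup.ext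
    intro i
    fin_cases i
    · show ((PresentedGroup.toGroup hφ).comp (PresentedGroup.toGroup hψ)) (PresentedGroup.of 0) =
        (MonoidHom.id (PresentedGroup (HminusRels p q))) (PresentedGroup.of 0)
      simp only [MonoidHom.comp_apply, MonoidHom.id_apply, PresentedGroup.toGroup.of, hψf,
        Matrix.cons_val_zero, Matrix.cons_val_one, Matrix.cons_val_two, Matrix.cons_val_three,
        Matrix.head_cons, Matrix.tail_cons, hvA, hvB, hgx, hgy, hgz,
        map_mul, map_inv, map_zpow, hφf]
      rw [← ha]
      group
    · show ((PresentedGroup.toGroup hφ).comp (PresentedGroup.toGroup hψ)) (PresentedGroup.of 1) =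
        (MonoidHom.id (PresentedGroup (HminusRels p q))) (PresentedGroup.of 1)
      simp only [MonoidHom.comp_apply, MonoidHom.id_apply, PresentedGroup.toGroup.of, hψf,
        Matrix.cons_val_zero, Matrix.cons_val_one, Matrix.cons_val_two, Matrix.cons_val_three,
        Matrix.head_cons, Matrix.tail_cons, hvA, hvB, hgx, hgy, hgz,
        map_mul, map_inv, map_zpow, hφf]
      rw [← hb]
      group
    · show ((PresentedGroup.toGroup hφ).comp (PresentedGroup.toGroup hψ)) (PresentedGroup.of 2) =
        (MonoidHom.id (PresentedGroup (HminusRels p q))) (PresentedGroup.of 2)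
      simp only [MonoidHom.comp_apply, MonoidHom.id_apply, PresentedGroup.toGroup.of, hψf,
        Matrix.cons_val_zero, Matrix.cons_val_one, Matrix.cons_val_two, Matrix.cons_val_three,
        Matrix.head_cons, Matrix.tail_cons, hvA, hvB, hgx, hgy, hgz,
        map_mul, map_inv, map_zpow, hφf]
      rw [← hal, hAl]
      group
    · show ((PresentedGroup.toGroup hφ).comp (PresentedGroup.toGroup hψ)) (PresentedGroup.of 3) =
        (MonoidHom.id (PresentedGroup (HminusRels p q))) (PresentedGroup.of 3)
      simp only [MonoidHom.comp_apply, MonoidHom.id_apply, PresentedGroup.toGroup.of, hψf,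
        Matrix.cons_val_zero, Matrix.cons_val_one, Matrix.cons_val_two, Matrix.cons_val_three,
        Matrix.head_cons, Matrix.tail_cons, hvA, hvB, hgx, hgy, hgz,
        map_mul, map_inv, map_zpow, hφf]
      rw [← hbe, hBe]
      group
end

section
/- Let p and q be odd integers with 5 ≤ p ≤ q, and let k be a positive integer with k ≡ 1 (mod 5). Then there is a surjective group homomorphism from the presented group Γ_{2(p+q)-k}(p,q) onto Coxeter's group G^{5,p,q}. -/
/-- The relators of Coxeter's group `G^{m,p,q}` on generators
`A = of 0`, `B = of 1`, `C = of 2`. -/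
def coxeterGRels (m p q : ℤ) : Set (FreeGroup (Fin 3)) :=
  let A : FreeGroup (Fin 3) := FreeGroup.of 0
  let B : FreeGroup (Fin 3) := FreeGroup.of 1
  let C : FreeGroup (Fin 3) := FreeGroup.of 2
  { A ^ p, B ^ q, C ^ m, (A * B) ^ 2, (B * C) ^ 2, (C * A) ^ 2, (A * B * C) ^ 2 }

set_option maxHeartbeats 1000000

/-- For `p,q` odd with `5 ≤ p ≤ q` and `k` a positive integer with `k ≡ 1 (mod 5)`,
the group `Γ_{2(p+q)-k}(p,q)` surjects onto Coxeter's group `G^{5,p,q}`. -/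
theorem gamma_2pq_minus_k_surjects_onto_G5pq (p q k : ℤ) (hp : Odd p) (hq : Odd q)
    (hp5 : 5 ≤ p) (hpq : p ≤ q) (hk : 0 < k) (hk5 : k ≡ 1 [ZMOD 5]) :
    ∃ f : PresentedGroup (pretzelRels p q (2 * (p + q) - k)) →*
        PresentedGroup (coxeterGRels 5 p q),
      Function.Surjective f := by
  obtain ⟨tp, htp⟩ := hp
  obtain ⟨tq, htq⟩ := hq
  obtain ⟨m5, hm5⟩ : (5:ℤ) ∣ 1 - k := hk5.dvd
  -- generators of the target group
  obtain ⟨A, hA0⟩ : ∃ a : PresentedGroup (coxeterGRels 5 p q),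
      a = PresentedGroup.mk (coxeterGRels 5 p q) (FreeGroup.of 0) := ⟨_, rfl⟩
  obtain ⟨B, hB0⟩ : ∃ a : PresentedGroup (coxeterGRels 5 p q),
      a = PresentedGroup.mk (coxeterGRels 5 p q) (FreeGroup.of 1) := ⟨_, rfl⟩
  obtain ⟨C, hC0⟩ : ∃ a : PresentedGroup (coxeterGRels 5 p q),
      a = PresentedGroup.mk (coxeterGRels 5 p q) (FreeGroup.of 2) := ⟨_, rfl⟩
  -- the relations hold in the target group
  have hrel : ∀ r ∈ coxeterGRels 5 p q, PresentedGroup.mk (coxeterGRels 5 p q) r = 1 :=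
    fun r hr => (QuotientGroup.eq_one_iff r).mpr (Subgroup.subset_normalClosure hr)
  have hAp : A ^ (p:ℤ) = 1 := by
    have h := hrel ((FreeGroup.of 0 : FreeGroup (Fin 3)) ^ (p:ℤ)) (by simp [coxeterGRels])
    rw [map_zpow, ← hA0] at h; exact h
  have hBq : B ^ (q:ℤ) = 1 := by
    have h := hrel ((FreeGroup.of 1 : FreeGroup (Fin 3)) ^ (q:ℤ)) (by simp [coxeterGRels])
    rw [map_zpow, ← hB0] at h; exact h
  have hC5 : C ^ (5:ℤ) = 1 := by
    have h := hrel ((FreeGroup.of 2 : FreeGroup (Fin 3)) ^ ((5:ℤ)))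
      (by simp [coxeterGRels])
    rw [map_zpow, ← hC0] at h; exact h
  have sqab : A*B*(A*B) = 1 := by
    have h := hrel ((FreeGroup.of 0 * FreeGroup.of 1 : FreeGroup (Fin 3)) ^ 2)
      (by simp [coxeterGRels])
    rw [map_pow, map_mul, ← hA0, ← hB0, pow_two] at h
    exact h
  have sqbc : B*C*(B*C) = 1 := by
    have h := hrel ((FreeGroup.of 1 * FreeGroup.of 2 : FreeGroup (Fin 3)) ^ 2)
      (by simp [coxeterGRels])
    rw [map_pow, map_mul, ← hB0, ← hC0, pow_two] at h
    exact h
  have sqca : C*A*(C*A) = 1 := by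
    have h := hrel ((FreeGroup.of 2 * FreeGroup.of 0 : FreeGroup (Fin 3)) ^ 2)
      (by simp [coxeterGRels])
    rw [map_pow, map_mul, ← hC0, ← hA0, pow_two] at h
    exact h
  have sqabc : A*B*C*(A*B*C) = 1 := by
    have h := hrel ((FreeGroup.of 0 * FreeGroup.of 1 * FreeGroup.of 2 : FreeGroup (Fin 3)) ^ 2)
      (by simp [coxeterGRels])
    rw [map_pow, map_mul, map_mul, ← hA0, ← hB0, ← hC0, pow_two] at h
    exact h
  have c5w : C*C*C*C*C = 1 := by
    calc C*C*C*C*C = C^((1:ℤ)+1+1+1+1) := by simp only [zpow_add, zpow_one]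
    _ = C^(5:ℤ) := by norm_num
    _ = 1 := hC5
  -- dihedral-type rewriting rules
  have r_ab : A*B = B⁻¹*A⁻¹ := by
    calc A*B = B⁻¹*A⁻¹*(A*B*(A*B)) := by group
    _ = B⁻¹*A⁻¹*1 := by rw [sqab]
    _ = B⁻¹*A⁻¹ := by group
  have r_ba : B*A = A⁻¹*B⁻¹ := by
    calc B*A = A⁻¹*(A*B*(A*B))*B⁻¹ := by group
    _ = A⁻¹*1*B⁻¹ := by rw [sqab]
    _ = A⁻¹*B⁻¹ := by group
  have r_bc : B*C = C⁻¹*B⁻¹ := by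
    calc B*C = C⁻¹*B⁻¹*(B*C*(B*C)) := by group
    _ = C⁻¹*B⁻¹*1 := by rw [sqbc]
    _ = C⁻¹*B⁻¹ := by group
  have r_cb : C*B = B⁻¹*C⁻¹ := by
    calc C*B = B⁻¹*(B*C*(B*C))*C⁻¹ := by group
    _ = B⁻¹*1*C⁻¹ := by rw [sqbc]
    _ = B⁻¹*C⁻¹ := by group
  have r_ca : C*A = A⁻¹*C⁻¹ := by
    calc C*A = A⁻¹*C⁻¹*(C*A*(C*A)) := by group
    _ = A⁻¹*C⁻¹*1 := by rw [sqca]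
    _ = A⁻¹*C⁻¹ := by group
  have r_ac : A*C = C⁻¹*A⁻¹ := by
    calc A*C = C⁻¹*(C*A*(C*A))*A⁻¹ := by group
    _ = C⁻¹*1*A⁻¹ := by rw [sqca]
    _ = C⁻¹*A⁻¹ := by group
  have r_abc : A*B*C = C⁻¹*B⁻¹*A⁻¹ := by
    calc A*B*C = C⁻¹*B⁻¹*A⁻¹*(A*B*C*(A*B*C)) := by group
    _ = C⁻¹*B⁻¹*A⁻¹*1 := by rw [sqabc]
    _ = C⁻¹*B⁻¹*A⁻¹ := by group
  have r_bca : B*C*A = A⁻¹*C⁻¹*B⁻¹ := by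
    calc B*C*A = A⁻¹*(A*B*C*(A*B*C))*(C⁻¹*B⁻¹) := by group
    _ = A⁻¹*1*(C⁻¹*B⁻¹) := by rw [sqabc]
    _ = A⁻¹*C⁻¹*B⁻¹ := by group
  have r_cab : C*A*B = B⁻¹*A⁻¹*C⁻¹ := by
    calc C*A*B = B⁻¹*A⁻¹*C⁻¹*(C*(A*B*C*(A*B*C))*C⁻¹) := by group
    _ = B⁻¹*A⁻¹*C⁻¹*(C*1*C⁻¹) := by rw [sqabc]
    _ = B⁻¹*A⁻¹*C⁻¹ := by rw [mul_one, mul_inv_cancel, mul_one]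
  have r_c3 : C*C*C = C⁻¹*C⁻¹ := by
    have h := congrArg (fun t => C⁻¹*C⁻¹*t) c5w
    simp only [mul_one] at h
    rw [← h]
    simp [mul_assoc]
  clear r_ba r_cb r_bca r_cab
  -- the images of the pretzel generators
  obtain ⟨Xt, hXt⟩ : ∃ x, x = A*C⁻¹*A⁻¹ := ⟨_, rfl⟩
  obtain ⟨Bt, hBt⟩ : ∃ x, x = A*C⁻¹*B*C*A⁻¹ := ⟨_, rfl⟩
  obtain ⟨Yt, hYt⟩ : ∃ x, x = Bt*Bt*Xt⁻¹ := ⟨_, rfl⟩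
  obtain ⟨Zt, hZt⟩ : ∃ x, x = A*A*Xt⁻¹ := ⟨_, rfl⟩
  -- order facts
  have hX5 : Xt ^ (5:ℤ) = 1 := by
    rw [hXt, conj_zpow, inv_zpow, hC5]; simp
  have hBtq : Bt ^ (q:ℤ) = 1 := by
    have hBt' : Bt = (A*C⁻¹)*B*(A*C⁻¹)⁻¹ := by rw [hBt]; group
    rw [hBt', conj_zpow, hBq]; simp [mul_assoc]
  -- power lemmas
  have hAA : A*A = A^(2:ℤ) := by
    calc A*A = A^((1:ℤ)+1) := by simp only [zpow_add, zpow_one]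
    _ = A^(2:ℤ) := by norm_num
  have hBtBt : Bt*Bt = Bt^(2:ℤ) := by
    calc Bt*Bt = Bt^((1:ℤ)+1) := by simp only [zpow_add, zpow_one]
    _ = Bt^(2:ℤ) := by norm_num
  have h1 : (A*A) ^ (tp:ℤ) = A⁻¹ := by
    calc (A*A)^(tp:ℤ) = (A^(2:ℤ))^(tp:ℤ) := by rw [hAA]
    _ = A^((2:ℤ)*tp) := (zpow_mul A 2 tp).symm
    _ = A^(p + (-1:ℤ)) := by rw [show (2:ℤ)*tp = p + (-1:ℤ) by omega]
    _ = A^(p:ℤ) * A^(-1:ℤ) := zpow_add A p (-1)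
    _ = 1 * A^(-1:ℤ) := by rw [hAp]
    _ = A⁻¹ := by rw [one_mul, zpow_neg_one]
  have h2 : (A*A) ^ (tp+1:ℤ) = A := by
    calc (A*A)^(tp+1:ℤ) = (A^(2:ℤ))^(tp+1:ℤ) := by rw [hAA]
    _ = A^((2:ℤ)*(tp+1)) := (zpow_mul A 2 (tp+1)).symm
    _ = A^(p + (1:ℤ)) := by rw [show (2:ℤ)*(tp+1) = p + 1 by omega]
    _ = A^(p:ℤ) * A^(1:ℤ) := zpow_add A p 1
    _ = 1 * A^(1:ℤ) := by rw [hAp]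
    _ = A := by rw [one_mul, zpow_one]
  have h3 : (Bt*Bt) ^ (tq:ℤ) = Bt⁻¹ := by
    calc (Bt*Bt)^(tq:ℤ) = (Bt^(2:ℤ))^(tq:ℤ) := by rw [hBtBt]
    _ = Bt^((2:ℤ)*tq) := (zpow_mul Bt 2 tq).symm
    _ = Bt^(q + (-1:ℤ)) := by rw [show (2:ℤ)*tq = q + (-1:ℤ) by omega]
    _ = Bt^(q:ℤ) * Bt^(-1:ℤ) := zpow_add Bt q (-1)
    _ = 1 * Bt^(-1:ℤ) := by rw [hBtq]
    _ = Bt⁻¹ := by rw [one_mul, zpow_neg_one]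
  have h4 : (Bt*Bt) ^ (tq+1:ℤ) = Bt := by
    calc (Bt*Bt)^(tq+1:ℤ) = (Bt^(2:ℤ))^(tq+1:ℤ) := by rw [hBtBt]
    _ = Bt^((2:ℤ)*(tq+1)) := (zpow_mul Bt 2 (tq+1)).symm
    _ = Bt^(q + (1:ℤ)) := by rw [show (2:ℤ)*(tq+1) = q + 1 by omega]
    _ = Bt^(q:ℤ) * Bt^(1:ℤ) := zpow_add Bt q 1
    _ = 1 * Bt^(1:ℤ) := by rw [hBtq]
    _ = Bt := by rw [one_mul, zpow_one]
  -- the four key word identities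
  have T1 : A*Xt⁻¹*A = Bt*Xt⁻¹*Bt := by
    rw [hXt, hBt]
    calc _ = A*(A*C) := by group
      _ = A*(A*C) := by group
      _ = A*(C⁻¹*A⁻¹) := congrArg (fun t => A*t) r_ac
      _ = A*C⁻¹*(C⁻¹*B⁻¹)*(B*C*A⁻¹) := by group
      _ = A*C⁻¹*(B*C)*(B*C*A⁻¹) := congrArg (fun t => A*C⁻¹*t*(B*C*A⁻¹)) r_bc.symm
      _ = A*C⁻¹*B*C*A⁻¹*(A*C⁻¹*A⁻¹)⁻¹*(A*C⁻¹*B*C*A⁻¹) := by group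
  have T2 : A*A*Xt⁻¹*(Bt*Bt) = Bt*Xt*Bt⁻¹*(A*A) := by
    rw [hXt, hBt]
    calc _ = A*A*(A*B)*(B*C*A⁻¹) := by group
      _ = A*A*(A*B)*(B*C*A⁻¹) := by group
      _ = A*A*(B⁻¹*A⁻¹)*(B*C*A⁻¹) := congrArg (fun t => A*A*t*(B*C*A⁻¹)) r_ab
      _ = A*A*B⁻¹*A⁻¹*(B*C)*(A⁻¹) := by group
      _ = A*A*B⁻¹*A⁻¹*(C⁻¹*B⁻¹)*(A⁻¹) := congrArg (fun t => A*A*B⁻¹*A⁻¹*t*(A⁻¹)) r_bc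
      _ = A*A*B⁻¹*A⁻¹*(C⁻¹*B⁻¹*A⁻¹) := by group
      _ = A*A*B⁻¹*A⁻¹*(A*B*C) := congrArg (fun t => A*A*B⁻¹*A⁻¹*t) r_abc.symm
      _ = A*(A*C) := by group
      _ = A*(C⁻¹*A⁻¹) := congrArg (fun t => A*t) r_ac
      _ = A*C⁻¹*B*(B⁻¹*A⁻¹) := by group
      _ = A*C⁻¹*B*(A*B) := congrArg (fun t => A*C⁻¹*B*t) r_ab.symm
      _ = A*C⁻¹*B*(A*B*C)*(C⁻¹) := by group
      _ = A*C⁻¹*B*(C⁻¹*B⁻¹*A⁻¹)*(C⁻¹) := congrArg (fun t => A*C⁻¹*B*t*(C⁻¹)) r_abc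
      _ = A*C⁻¹*B*C⁻¹*B⁻¹*(A⁻¹*C⁻¹) := by group
      _ = A*C⁻¹*B*C⁻¹*B⁻¹*(C*A) := congrArg (fun t => A*C⁻¹*B*C⁻¹*B⁻¹*t) r_ca.symm
      _ = A*C⁻¹*B*C*A⁻¹*(A*C⁻¹*A⁻¹)*(A*C⁻¹*B*C*A⁻¹)⁻¹*(A*A) := by group
  have T3 : A*A*(Bt*Bt)⁻¹*(A*A)*Xt⁻¹*(Bt*Bt) = A*Xt*A := by
    rw [hXt, hBt]
    calc _ = A*A*A*C⁻¹*B⁻¹*B⁻¹*C*A*(A*B)*(B*C*A⁻¹) := by group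
      _ = A*A*A*C⁻¹*B⁻¹*B⁻¹*C*A*(A*B)*(B*C*A⁻¹) := by group
      _ = A*A*A*C⁻¹*B⁻¹*B⁻¹*C*A*(B⁻¹*A⁻¹)*(B*C*A⁻¹) := congrArg (fun t => A*A*A*C⁻¹*B⁻¹*B⁻¹*C*A*t*(B*C*A⁻¹)) r_ab
      _ = A*A*A*C⁻¹*B⁻¹*B⁻¹*C*A*B⁻¹*A⁻¹*(B*C)*(A⁻¹) := by group
      _ = A*A*A*C⁻¹*B⁻¹*B⁻¹*C*A*B⁻¹*A⁻¹*(C⁻¹*B⁻¹)*(A⁻¹) := congrArg (fun t => A*A*A*C⁻¹*B⁻¹*B⁻¹*C*A*B⁻¹*A⁻¹*t*(A⁻¹)) r_bc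
      _ = A*A*A*C⁻¹*B⁻¹*B⁻¹*C*A*B⁻¹*A⁻¹*C⁻¹*(B⁻¹*A⁻¹) := by group
      _ = A*A*A*C⁻¹*B⁻¹*B⁻¹*C*A*B⁻¹*A⁻¹*C⁻¹*(A*B) := congrArg (fun t => A*A*A*C⁻¹*B⁻¹*B⁻¹*C*A*B⁻¹*A⁻¹*C⁻¹*t) r_ab.symm
      _ = A*A*A*(C⁻¹*B⁻¹)*(B⁻¹*C*A*B⁻¹*A⁻¹*C⁻¹*A*B) := by group
      _ = A*A*A*(B*C)*(B⁻¹*C*A*B⁻¹*A⁻¹*C⁻¹*A*B) := congrArg (fun t => A*A*A*t*(B⁻¹*C*A*B⁻¹*A⁻¹*C⁻¹*A*B)) r_bc.symm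
      _ = A*A*A*B*C*B⁻¹*(C*A)*(B⁻¹*A⁻¹*C⁻¹*A*B) := by group
      _ = A*A*A*B*C*B⁻¹*(A⁻¹*C⁻¹)*(B⁻¹*A⁻¹*C⁻¹*A*B) := congrArg (fun t => A*A*A*B*C*B⁻¹*t*(B⁻¹*A⁻¹*C⁻¹*A*B)) r_ca
      _ = A*A*(A*B*C)*(B⁻¹*A⁻¹*C⁻¹*B⁻¹*A⁻¹*C⁻¹*A*B) := by group
      _ = A*A*(C⁻¹*B⁻¹*A⁻¹)*(B⁻¹*A⁻¹*C⁻¹*B⁻¹*A⁻¹*C⁻¹*A*B) := congrArg (fun t => A*A*t*(B⁻¹*A⁻¹*C⁻¹*B⁻¹*A⁻¹*C⁻¹*A*B)) r_abc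
      _ = A*A*C⁻¹*B⁻¹*A⁻¹*B⁻¹*A⁻¹*(C⁻¹*B⁻¹*A⁻¹)*(C⁻¹*A*B) := by group
      _ = A*A*C⁻¹*B⁻¹*A⁻¹*B⁻¹*A⁻¹*(A*B*C)*(C⁻¹*A*B) := congrArg (fun t => A*A*C⁻¹*B⁻¹*A⁻¹*B⁻¹*A⁻¹*t*(C⁻¹*A*B)) r_abc.symm
      _ = A*(A*C⁻¹*A⁻¹)*A := by group
  have T4 : Bt⁻¹*(A*A)*Bt⁻¹*A⁻¹*(Bt*Bt)*A⁻¹ = Xt := by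
    rw [hXt, hBt]
    calc _ = A*C⁻¹*B⁻¹*C*A*A*C⁻¹*B⁻¹*C*A⁻¹*C⁻¹*B*(B*C)*(A⁻¹*A⁻¹) := by group
      _ = A*C⁻¹*B⁻¹*C*A*A*C⁻¹*B⁻¹*C*A⁻¹*C⁻¹*B*(B*C)*(A⁻¹*A⁻¹) := by group
      _ = A*C⁻¹*B⁻¹*C*A*A*C⁻¹*B⁻¹*C*A⁻¹*C⁻¹*B*(C⁻¹*B⁻¹)*(A⁻¹*A⁻¹) := congrArg (fun t => A*C⁻¹*B⁻¹*C*A*A*C⁻¹*B⁻¹*C*A⁻¹*C⁻¹*B*t*(A⁻¹*A⁻¹)) r_bc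
      _ = A*C⁻¹*B⁻¹*C*A*A*(C⁻¹*B⁻¹)*(C*A⁻¹*C⁻¹*B*C⁻¹*B⁻¹*A⁻¹*A⁻¹) := by group
      _ = A*C⁻¹*B⁻¹*C*A*A*(B*C)*(C*A⁻¹*C⁻¹*B*C⁻¹*B⁻¹*A⁻¹*A⁻¹) := congrArg (fun t => A*C⁻¹*B⁻¹*C*A*A*t*(C*A⁻¹*C⁻¹*B*C⁻¹*B⁻¹*A⁻¹*A⁻¹)) r_bc.symm
      _ = A*C⁻¹*B⁻¹*C*A*(A*B)*(C*C*A⁻¹*C⁻¹*B*C⁻¹*B⁻¹*A⁻¹*A⁻¹) := by group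
      _ = A*C⁻¹*B⁻¹*C*A*(B⁻¹*A⁻¹)*(C*C*A⁻¹*C⁻¹*B*C⁻¹*B⁻¹*A⁻¹*A⁻¹) := congrArg (fun t => A*C⁻¹*B⁻¹*C*A*t*(C*C*A⁻¹*C⁻¹*B*C⁻¹*B⁻¹*A⁻¹*A⁻¹)) r_ab
      _ = A*C⁻¹*B⁻¹*(C*A)*(B⁻¹*A⁻¹*C*C*A⁻¹*C⁻¹*B*C⁻¹*B⁻¹*A⁻¹*A⁻¹) := by group
      _ = A*C⁻¹*B⁻¹*(A⁻¹*C⁻¹)*(B⁻¹*A⁻¹*C*C*A⁻¹*C⁻¹*B*C⁻¹*B⁻¹*A⁻¹*A⁻¹) := congrArg (fun t => A*C⁻¹*B⁻¹*t*(B⁻¹*A⁻¹*C*C*A⁻¹*C⁻¹*B*C⁻¹*B⁻¹*A⁻¹*A⁻¹)) r_ca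
      _ = A*C⁻¹*B⁻¹*A⁻¹*C⁻¹*B⁻¹*A⁻¹*C*C*(A⁻¹*C⁻¹)*(B*C⁻¹*B⁻¹*A⁻¹*A⁻¹) := by group
      _ = A*C⁻¹*B⁻¹*A⁻¹*C⁻¹*B⁻¹*A⁻¹*C*C*(C*A)*(B*C⁻¹*B⁻¹*A⁻¹*A⁻¹) := congrArg (fun t => A*C⁻¹*B⁻¹*A⁻¹*C⁻¹*B⁻¹*A⁻¹*C*C*t*(B*C⁻¹*B⁻¹*A⁻¹*A⁻¹)) r_ca.symm
      _ = A*C⁻¹*B⁻¹*A⁻¹*C⁻¹*B⁻¹*A⁻¹*C*C*C*(A*B)*(C⁻¹*B⁻¹*A⁻¹*A⁻¹) := by group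
      _ = A*C⁻¹*B⁻¹*A⁻¹*C⁻¹*B⁻¹*A⁻¹*C*C*C*(B⁻¹*A⁻¹)*(C⁻¹*B⁻¹*A⁻¹*A⁻¹) := congrArg (fun t => A*C⁻¹*B⁻¹*A⁻¹*C⁻¹*B⁻¹*A⁻¹*C*C*C*t*(C⁻¹*B⁻¹*A⁻¹*A⁻¹)) r_ab
      _ = A*(C⁻¹*B⁻¹*A⁻¹)*(C⁻¹*B⁻¹*A⁻¹*C*C*C*B⁻¹*A⁻¹*C⁻¹*B⁻¹*A⁻¹*A⁻¹) := by group
      _ = A*(A*B*C)*(C⁻¹*B⁻¹*A⁻¹*C*C*C*B⁻¹*A⁻¹*C⁻¹*B⁻¹*A⁻¹*A⁻¹) := congrArg (fun t => A*t*(C⁻¹*B⁻¹*A⁻¹*C*C*C*B⁻¹*A⁻¹*C⁻¹*B⁻¹*A⁻¹*A⁻¹)) r_abc.symm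
      _ = A*C*C*C*B⁻¹*A⁻¹*(C⁻¹*B⁻¹*A⁻¹)*(A⁻¹) := by group
      _ = A*C*C*C*B⁻¹*A⁻¹*(A*B*C)*(A⁻¹) := congrArg (fun t => A*C*C*C*B⁻¹*A⁻¹*t*(A⁻¹)) r_abc.symm
      _ = A*(C*C*C)*(C*A⁻¹) := by group
      _ = A*(C⁻¹*C⁻¹)*(C*A⁻¹) := congrArg (fun t => A*t*(C*A⁻¹)) r_c3
      _ = A*C⁻¹*A⁻¹ := by group
  -- the lifting function
  let f : Fin 3 → PresentedGroup (coxeterGRels 5 p q) := fun i =>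
    if i = 0 then Xt else if i = 1 then Yt else Zt
  have hf0 : f 0 = Xt := rfl
  have hf1 : f 1 = Yt := rfl
  have hf2 : f 2 = Zt := rfl
  have hZX : Zt * Xt = A*A := by rw [hZt]; group
  have hYX : Yt * Xt = Bt*Bt := by rw [hYt]; group
  have hYZ : Yt * Zt⁻¹ = Bt*Bt*(A*A)⁻¹ := by rw [hYt, hZt]; group
  have hmain : ∀ r ∈ pretzelRels p q (2 * (p + q) - k), FreeGroup.lift f r = 1 := by
    intro r hr
    simp only [pretzelRels, Set.mem_insert_iff, Set.mem_singleton_iff] at hr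
    obtain rfl | rfl | rfl | rfl := hr
    · -- relator 1
      simp only [map_mul, map_zpow, map_inv, FreeGroup.lift_apply_of, hf0, hf1, hf2]
      rw [show ((p-1)/2 : ℤ) = tp by omega, show ((q+1)/2 : ℤ) = tq + 1 by omega,
        hZX, hYX]
      simp only [zpow_neg]
      rw [h1, h4, hYt, hZt]
      calc _ = (A*Xt⁻¹*A) * (Bt*Xt⁻¹*Bt)⁻¹ := by group
      _ = (Bt*Xt⁻¹*Bt) * (Bt*Xt⁻¹*Bt)⁻¹ := by rw [T1]
      _ = 1 := by group
    · -- relator 2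
      simp only [map_mul, map_zpow, map_inv, FreeGroup.lift_apply_of, hf0, hf1, hf2]
      rw [show ((q-1)/2 : ℤ) = tq by omega, hYX, hYZ]
      simp only [zpow_neg]
      rw [h3, hYt]
      calc _ = (A*A*Xt⁻¹*(Bt*Bt)) * ((A*A)⁻¹ * (Bt*Xt*Bt⁻¹)⁻¹) := by
            simp only [mul_assoc, mul_inv_rev, inv_inv, one_mul, mul_one, inv_mul_cancel_left,
            mul_inv_cancel_left, inv_mul_cancel, mul_inv_cancel]
      _ = (Bt*Xt*Bt⁻¹*(A*A)) * ((A*A)⁻¹ * (Bt*Xt*Bt⁻¹)⁻¹) := by rw [T2]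
      _ = 1 := by group
    · -- relator 3
      simp only [map_mul, map_zpow, map_inv, FreeGroup.lift_apply_of, hf0, hf1, hf2]
      rw [show ((p+1)/2 : ℤ) = tp + 1 by omega, hZX, hYZ]
      simp only [zpow_neg]
      rw [h2, hZt]
      calc _ = (A*A*(Bt*Bt)⁻¹*(A*A)*Xt⁻¹*(Bt*Bt)) * ((A*A)⁻¹ * (A*Xt*A⁻¹)⁻¹) := by
            simp only [mul_assoc, mul_inv_rev, inv_inv, one_mul, mul_one, inv_mul_cancel_left,
            mul_inv_cancel_left, inv_mul_cancel, mul_inv_cancel]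
      _ = (A*Xt*A) * ((A*A)⁻¹ * (A*Xt*A⁻¹)⁻¹) := by rw [T3]
      _ = 1 := by group
    · -- relator 4 (the surgery relator)
      simp only [map_mul, map_zpow, map_inv, FreeGroup.lift_apply_of, hf0, hf1, hf2]
      rw [show ((p-1)/2 : ℤ) = tp by omega, show ((p+1)/2 : ℤ) = tp + 1 by omega,
        show ((q-1)/2 : ℤ) = tq by omega, show ((q+1)/2 : ℤ) = tq + 1 by omega,
        hZX, hYX, hYZ, h1, h2, h3, h4]
      calc _ = Xt^((2*(p+q)-k) + (-2*(p+q)) : ℤ) * (Bt⁻¹*A^(2:ℤ)*Bt⁻¹*A⁻¹*(Bt*Bt)*A⁻¹) := by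
            group
      _ = Xt^((2*(p+q)-k) + (-2*(p+q)) : ℤ) * (Bt⁻¹*(A*A)*Bt⁻¹*A⁻¹*(Bt*Bt)*A⁻¹) := by
            rw [← hAA]
      _ = Xt^(-k:ℤ) * (Bt⁻¹*(A*A)*Bt⁻¹*A⁻¹*(Bt*Bt)*A⁻¹) := by
            rw [show ((2*(p+q)-k) + (-2*(p+q)) : ℤ) = -k by ring]
      _ = Xt^(-k:ℤ) * Xt := by rw [T4]
      _ = Xt^(-k+1:ℤ) := by group
      _ = Xt^((5:ℤ)*m5) := by rw [show (-k+1:ℤ) = 5*m5 by omega]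
      _ = (Xt^(5:ℤ))^m5 := zpow_mul Xt 5 m5
      _ = 1 := by rw [hX5, one_zpow]
  refine ⟨PresentedGroup.toGroup hmain, ?_⟩
  -- surjectivity
  have hXR : Xt ∈ (PresentedGroup.toGroup hmain).range := by
    exact ⟨PresentedGroup.of 0, by rw [PresentedGroup.toGroup.of]; exact hf0⟩
  have hYR : Yt ∈ (PresentedGroup.toGroup hmain).range := by
    exact ⟨PresentedGroup.of 1, by rw [PresentedGroup.toGroup.of]; exact hf1⟩
  have hZR : Zt ∈ (PresentedGroup.toGroup hmain).range := by
    exact ⟨PresentedGroup.of 2, by rw [PresentedGroup.toGroup.of]; exact hf2⟩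
  have hAAR : A*A ∈ (PresentedGroup.toGroup hmain).range := by
    rw [← hZX]; exact mul_mem hZR hXR
  have hAR : A ∈ (PresentedGroup.toGroup hmain).range := by
    rw [← h2]; exact zpow_mem hAAR _
  have hCR : C ∈ (PresentedGroup.toGroup hmain).range := by
    have : C = A⁻¹*Xt⁻¹*A := by rw [hXt]; group
    rw [this]
    exact mul_mem (mul_mem (inv_mem hAR) (inv_mem hXR)) hAR
  have hBBR : Bt*Bt ∈ (PresentedGroup.toGroup hmain).range := by
    rw [← hYX]; exact mul_mem hYR hXR
  have hBtR : Bt ∈ (PresentedGroup.toGroup hmain).range := by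
    rw [← h4]; exact zpow_mem hBBR _
  have hBR : B ∈ (PresentedGroup.toGroup hmain).range := by
    have : B = C*A⁻¹*Bt*A*C⁻¹ := by rw [hBt]; group
    rw [this]
    exact mul_mem (mul_mem (mul_mem (mul_mem hCR (inv_mem hAR)) hBtR) hAR) (inv_mem hCR)
  intro g
  have hg : g ∈ (PresentedGroup.toGroup hmain).range := by
    refine PresentedGroup.generated_by _ _ ?_ g
    intro j
    fin_cases j
    · show PresentedGroup.mk (coxeterGRels 5 p q) (FreeGroup.of 0) ∈ _
      rw [← hA0]; exact hAR
    · show PresentedGroup.mk (coxeterGRels 5 p q) (FreeGroup.of 1) ∈ _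
      rw [← hB0]; exact hBR
    · show PresentedGroup.mk (coxeterGRels 5 p q) (FreeGroup.of 2) ∈ _
      rw [← hC0]; exact hCR
  exact hg
end

section
/- Let P₁(ζ) = ζ^8 + 8ζ^7 + 21ζ^6 + 14ζ^5 - 19ζ^4 - 20ζ^3 + 5ζ^2 + 2ζ + 1 and P₂(ζ) = ζ^8 + 8ζ^7 + 21ζ^6 + 14ζ^5 - 19ζ^4 - 20ζ^3 + 7ζ^2 + 6ζ - 1, regarded as polynomials over the complex numbers. Then the set { -ζ(2 + ζ) : ζ ∈ ℂ, P₁(ζ)·P₂(ζ) = 0 } has at least 8 elements. -/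
open Polynomial

/-- The degree-8 polynomial `Q₁ · Q₂` in `s = ζ² + 2ζ`. -/
noncomputable def ohtQ : ℂ[X] :=
  X ^ 8 - 6 * X ^ 7 + 11 * X ^ 6 - 2 * X ^ 5 - 11 * X ^ 4 + 4 * X ^ 3 + 3 * X ^ 2 + 2 * X - 1

lemma ohtQ_derivative :
    derivative ohtQ =
      8 * X ^ 7 - 42 * X ^ 6 + 66 * X ^ 5 - 10 * X ^ 4 - 44 * X ^ 3 + 12 * X ^ 2 + 6 * X + 2 := by
  unfold ohtQ
  simp only [derivative_add, derivative_sub, derivative_mul, derivative_X_pow, derivative_X,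
    derivative_one, derivative_ofNat, map_natCast, Nat.cast_ofNat, map_ofNat]
  ring

lemma ohtQ_separable : Separable ohtQ := by
  rw [separable_def']
  refine ⟨C (187346 : ℂ)⁻¹ *
      (-55776 + 320426 * X + 1128048 * X ^ 2 - 1119056 * X ^ 3 - 1602754 * X ^ 4
        + 1774310 * X ^ 5 - 427640 * X ^ 6),
    C (187346 : ℂ)⁻¹ *
      (65785 + 18634 * X - 123350 * X ^ 2 - 351147 * X ^ 3 + 210401 * X ^ 4
        + 303208 * X ^ 5 - 261880 * X ^ 6 + 53455 * X ^ 7), ?_⟩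
  rw [ohtQ_derivative]
  have key :
      (-55776 + 320426 * X + 1128048 * X ^ 2 - 1119056 * X ^ 3 - 1602754 * X ^ 4
        + 1774310 * X ^ 5 - 427640 * X ^ 6) * ohtQ +
      (65785 + 18634 * X - 123350 * X ^ 2 - 351147 * X ^ 3 + 210401 * X ^ 4
        + 303208 * X ^ 5 - 261880 * X ^ 6 + 53455 * X ^ 7) *
        (8 * X ^ 7 - 42 * X ^ 6 + 66 * X ^ 5 - 10 * X ^ 4 - 44 * X ^ 3 + 12 * X ^ 2 + 6 * X + 2)
      = (187346 : ℂ[X]) := by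
    unfold ohtQ; ring
  calc C (187346 : ℂ)⁻¹ *
      (-55776 + 320426 * X + 1128048 * X ^ 2 - 1119056 * X ^ 3 - 1602754 * X ^ 4
        + 1774310 * X ^ 5 - 427640 * X ^ 6) * ohtQ +
      C (187346 : ℂ)⁻¹ *
      (65785 + 18634 * X - 123350 * X ^ 2 - 351147 * X ^ 3 + 210401 * X ^ 4
        + 303208 * X ^ 5 - 261880 * X ^ 6 + 53455 * X ^ 7) *
        (8 * X ^ 7 - 42 * X ^ 6 + 66 * X ^ 5 - 10 * X ^ 4 - 44 * X ^ 3 + 12 * X ^ 2 + 6 * X + 2)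
      = C (187346 : ℂ)⁻¹ *
        ((-55776 + 320426 * X + 1128048 * X ^ 2 - 1119056 * X ^ 3 - 1602754 * X ^ 4
          + 1774310 * X ^ 5 - 427640 * X ^ 6) * ohtQ +
        (65785 + 18634 * X - 123350 * X ^ 2 - 351147 * X ^ 3 + 210401 * X ^ 4
          + 303208 * X ^ 5 - 261880 * X ^ 6 + 53455 * X ^ 7) *
          (8 * X ^ 7 - 42 * X ^ 6 + 66 * X ^ 5 - 10 * X ^ 4 - 44 * X ^ 3 + 12 * X ^ 2 + 6 * X
            + 2)) := by ring
    _ = C (187346 : ℂ)⁻¹ * C (187346 : ℂ) := by rw [key, map_ofNat]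
    _ = 1 := by rw [← C_mul, inv_mul_cancel₀ (by norm_num), C_1]

lemma ohtQ_natDegree : ohtQ.natDegree = 8 := by
  unfold ohtQ; compute_degree!

lemma ohtQ_ne_zero : ohtQ ≠ 0 := by
  intro h
  have := ohtQ_natDegree
  rw [h, natDegree_zero] at this
  exact (by norm_num : (0 : ℕ) ≠ 8) this

lemma ohtQ_eval (ζ : ℂ) :
    eval (ζ ^ 2 + 2 * ζ) ohtQ =
      (ζ ^ 8 + 8 * ζ ^ 7 + 21 * ζ ^ 6 + 14 * ζ ^ 5 - 19 * ζ ^ 4 - 20 * ζ ^ 3 +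
          5 * ζ ^ 2 + 2 * ζ + 1) *
        (ζ ^ 8 + 8 * ζ ^ 7 + 21 * ζ ^ 6 + 14 * ζ ^ 5 - 19 * ζ ^ 4 - 20 * ζ ^ 3 +
          7 * ζ ^ 2 + 6 * ζ - 1) := by
  unfold ohtQ
  simp only [eval_add, eval_sub, eval_mul, eval_pow, eval_X, eval_ofNat, eval_one]
  ring

/-- The set of cross-ratio values `-ζ(2+ζ)` over the roots `ζ` of the product of the two
degree-8 polynomials arising from Ohtsuki's method for the boundary slope 24 of the
`(-2,5,7)` pretzel knot has at least 8 elements. -/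
theorem crossratio_values_card_ge_eight :
    8 ≤ Set.ncard { w : ℂ | ∃ ζ : ℂ,
      (ζ ^ 8 + 8 * ζ ^ 7 + 21 * ζ ^ 6 + 14 * ζ ^ 5 - 19 * ζ ^ 4 - 20 * ζ ^ 3 +
          5 * ζ ^ 2 + 2 * ζ + 1) *
        (ζ ^ 8 + 8 * ζ ^ 7 + 21 * ζ ^ 6 + 14 * ζ ^ 5 - 19 * ζ ^ 4 - 20 * ζ ^ 3 +
          7 * ζ ^ 2 + 6 * ζ - 1) = 0 ∧
      w = -ζ * (2 + ζ) } := by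
  have hset : { w : ℂ | ∃ ζ : ℂ,
      (ζ ^ 8 + 8 * ζ ^ 7 + 21 * ζ ^ 6 + 14 * ζ ^ 5 - 19 * ζ ^ 4 - 20 * ζ ^ 3 +
          5 * ζ ^ 2 + 2 * ζ + 1) *
        (ζ ^ 8 + 8 * ζ ^ 7 + 21 * ζ ^ 6 + 14 * ζ ^ 5 - 19 * ζ ^ 4 - 20 * ζ ^ 3 +
          7 * ζ ^ 2 + 6 * ζ - 1) = 0 ∧
      w = -ζ * (2 + ζ) } = ↑(ohtQ.roots.toFinset.image (fun s => -s)) := by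
    ext w
    simp only [Set.mem_setOf_eq, Finset.coe_image, Set.mem_image, Finset.mem_coe,
      Multiset.mem_toFinset, mem_roots, ohtQ_ne_zero, ne_eq, not_false_eq_true, true_and,
      IsRoot.def]
    constructor
    · rintro ⟨ζ, hζ, rfl⟩
      refine ⟨ζ ^ 2 + 2 * ζ, ?_, by ring⟩
      rw [ohtQ_eval]; exact hζ
    · rintro ⟨s, hs, rfl⟩
      obtain ⟨z, hz⟩ := IsAlgClosed.exists_pow_nat_eq (k := ℂ) (s + 1) (n := 2) (by norm_num)
      refine ⟨z - 1, ?_, by linear_combination hz⟩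
      have h1 : (z - 1) ^ 2 + 2 * (z - 1) = s := by linear_combination hz
      have := ohtQ_eval (z - 1)
      rw [h1, hs] at this
      exact this.symm
  rw [hset, Set.ncard_coe_finset,
    Finset.card_image_of_injective _ neg_injective,
    Multiset.toFinset_card_of_nodup (nodup_roots ohtQ_separable)]
  have hcard : Multiset.card ohtQ.roots = 8 := by
    rw [splits_iff_card_roots.mp (IsAlgClosed.splits ohtQ), ohtQ_natDegree]
  rw [hcard]
end
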